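/- arXiv:2209.00308 — 2 statements merged into one kernel-verified Lean document; each statement's English description precedes it below -/
import Mathlib

section
/- If G is an almost bipartite graph, then |V(G)| − 1 ≤ α(G) + μ(G) ≤ |V(G)|. -/
namespace AlmostBip

open SimpleGraph

variable {V : Type*}

/-- A set of vertices is independent if no two of its vertices are adjacent. -/
def IsIndepSet (G : SimpleGraph V) (s : Set V) : Prop :=
  s.Pairwise fun a b => ¬ G.Adj a b

/-- The independence number `α(G)`: the maximum size of an independent set. -/
noncomputable def alpha (G : SimpleGraph V) : ℕ :=
  sSup {n | ∃ s : Set V, IsIndepSet G s ∧ s.ncard = n}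

/-- `Ω(G)`: the family of all maximum independent sets. -/
def Omega (G : SimpleGraph V) : Set (Set V) :=
  {s | IsIndepSet G s ∧ s.ncard = alpha G}

/-- `core(G)`: the intersection of all maximum independent sets. -/
def core (G : SimpleGraph V) : Set V := ⋂₀ Omega G

/-- `corona(G)`: the union of all maximum independent sets. -/
def corona (G : SimpleGraph V) : Set V := ⋃₀ Omega G

/-- A matching: a set of edges of `G` that are pairwise non-incident. -/
def IsMatching (G : SimpleGraph V) (M : Set (Sym2 V)) : Prop :=
  M ⊆ G.edgeSet ∧ M.Pairwise fun e f => ∀ x, x ∈ e → x ∉ f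

/-- The matching number `μ(G)`: the maximum size of a matching. -/
noncomputable def mu (G : SimpleGraph V) : ℕ :=
  sSup {n | ∃ M : Set (Sym2 V), IsMatching G M ∧ M.ncard = n}

/-- A König-Egerváry graph: `α(G) + μ(G) = |V(G)|`. -/
def KonigEgervary (G : SimpleGraph V) : Prop :=
  alpha G + mu G = Nat.card V

/-- `N(A)`: the set of vertices having a neighbour in `A`. -/
def nbhd (G : SimpleGraph V) (A : Set V) : Set V :=
  {x | ∃ a ∈ A, G.Adj x a}

/-- The difference `d_G(A) = |A| - |N(A)|`. -/
noncomputable def diffOf (G : SimpleGraph V) (A : Set V) : ℤ :=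
  (A.ncard : ℤ) - ((nbhd G A).ncard : ℤ)

/-- The critical difference `d(G) = max {d_G(A) : A ⊆ V(G)}`. -/
noncomputable def critDiff (G : SimpleGraph V) : ℤ :=
  sSup {d | ∃ A : Set V, diffOf G A = d}

/-- A set is critical if its difference attains the critical difference. -/
def IsCriticalSet (G : SimpleGraph V) (A : Set V) : Prop :=
  diffOf G A = critDiff G

/-- `ker(G)`: the intersection of all critical independent sets. -/
def ker (G : SimpleGraph V) : Set V :=
  ⋂₀ {A : Set V | IsCriticalSet G A ∧ IsIndepSet G A}

/-- A closed walk is an odd cycle if it is a cycle of odd length. -/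
def IsOddCycle (G : SimpleGraph V) {v : V} (c : G.Walk v v) : Prop :=
  c.IsCycle ∧ Odd c.length

/-- `c` is the unique odd cycle of `G`: it is an odd cycle and any odd cycle
of `G` has the same edge set as `c`. -/
def UniqueOddCycle (G : SimpleGraph V) {v : V} (c : G.Walk v v) : Prop :=
  IsOddCycle G c ∧
    ∀ (u : V) (c' : G.Walk u u), IsOddCycle G c' →
      {e | e ∈ c'.edges} = {e | e ∈ c.edges}

/-- `G` is almost bipartite if it has a unique odd cycle. -/
def AlmostBipartite (G : SimpleGraph V) : Prop :=
  ∃ (v : V) (c : G.Walk v v), UniqueOddCycle G c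

/-- `V(C)`: the vertex set of a cycle given as a closed walk. -/
def cycleVerts {G : SimpleGraph V} {v : V} (c : G.Walk v v) : Set V :=
  {u | u ∈ c.support}

/-- `E(C)`: the edge set of a cycle given as a closed walk. -/
def cycleEdges {G : SimpleGraph V} {v : V} (c : G.Walk v v) : Set (Sym2 V) :=
  {e | e ∈ c.edges}

/-- `G - E(C)`: the graph `G` with the edges of the cycle deleted. -/
def Gdel (G : SimpleGraph V) {v : V} (c : G.Walk v v) : SimpleGraph V :=
  G.deleteEdges (cycleEdges c)

/-- `V(D_y)`: the vertex set of the connected component of `G - E(C)`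
containing `y`. -/
def Dset (G : SimpleGraph V) {v : V} (c : G.Walk v v) (y : V) : Set V :=
  {u | (Gdel G c).Reachable u y}

/-- `D_y`: the connected component of `G - E(C)` containing `y`,
as an induced subgraph. -/
def Dgraph (G : SimpleGraph V) {v : V} (c : G.Walk v v) (y : V) :
    SimpleGraph ↥(Dset G c y) :=
  SimpleGraph.induce (Dset G c y) (Gdel G c)

/-- `D_y - y`: the component `D_y` with the vertex `y` deleted. -/
def DgraphMinus (G : SimpleGraph V) {v : V} (c : G.Walk v v) (y : V) :
    SimpleGraph ↥(Dset G c y \ {y}) :=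
  SimpleGraph.induce (Dset G c y \ {y}) (Gdel G c)

/-- `N₁(C)`: the vertices off the cycle having a neighbour on the cycle. -/
def N1 (G : SimpleGraph V) {v : V} (c : G.Walk v v) : Set V :=
  {u | u ∉ cycleVerts c ∧ ∃ w ∈ cycleVerts c, G.Adj u w}

end AlmostBip

open AlmostBip


namespace AlmostBipAux

open SimpleGraph Finset AlmostBip

variable {V : Type*}




lemma path_loop_edge {G : SimpleGraph V} {y u : V} (p : G.Walk y u) (hp : p.IsPath)
    (he : s(u, y) ∈ p.edges) : p.length = 1 := by
  cases p with
  | nil => simp at he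
  | @cons _ z _ h2 q =>
    simp only [Walk.edges_cons, List.mem_cons] at he
    rcases he with he | he
    · rw [Sym2.eq_iff] at he
      rcases he with ⟨rfl, rfl⟩ | ⟨rfl, -⟩
      · exact absurd rfl h2.ne'
      · -- q : Walk u u, a path, so nil
        have hq : q.IsPath := hp.of_cons
        cases q with
        | nil => simp
        | @cons _ z' _ h3 q' =>
          rw [Walk.cons_isPath_iff] at hq
          exact absurd q'.end_mem_support hq.2
    · have : y ∈ q.support := Walk.snd_mem_support_of_mem_edges q he
      rw [Walk.cons_isPath_iff] at hp
      exact absurd this hp.2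

lemma no_odd_closed_walk {G : SimpleGraph V}
    (hnc : ∀ (v : V) (c : G.Walk v v), c.IsCycle → ¬ Odd c.length) :
    ∀ (n : ℕ) (u : V) (w : G.Walk u u), w.length = n → ¬ Odd n := by
  classical
  intro n
  induction n using Nat.strong_induction_on with
  | _ n IH =>
  intro u w hlen hodd
  cases w with
  | nil =>
    rw [← hlen] at hodd
    simp [Nat.odd_iff] at hodd
  | @cons _ y _ h r =>
    by_cases hnd : r.support.Nodup
    · have hr : r.IsPath := (Walk.isPath_def r).mpr hnd
      by_cases he : s(u, y) ∈ r.edges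
      · have h1 : r.length = 1 := path_loop_edge r hr he
        rw [Walk.length_cons, h1] at hlen
        rw [Nat.odd_iff] at hodd
        omega
      · have hcyc : (Walk.cons h r).IsCycle := by
          rw [Walk.isCycle_def]
          refine ⟨(Walk.isTrail_def _).mpr ?_, by simp, ?_⟩
          · rw [Walk.edges_cons]
            exact List.nodup_cons.mpr ⟨he, hr.isTrail.edges_nodup⟩
          · simpa using hnd
        exact hnc u _ hcyc (hlen ▸ hodd)
    · rw [List.nodup_iff_count_le_one] at hnd
      push_neg at hnd
      obtain ⟨x, hx2⟩ := hnd
      have hx2 : 2 ≤ List.count x r.support := hx2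
      have hxmem : x ∈ r.support := by
        rw [← List.count_pos_iff]; omega
      obtain ⟨t, d, happ, hct, hcd⟩ :
          ∃ (t : G.Walk y x) (d : G.Walk x u), t.append d = r ∧
            List.count x t.support = 1 ∧ 1 ≤ List.count x d.support.tail := by
        refine ⟨r.takeUntil x hxmem, r.dropUntil x hxmem, r.take_spec hxmem,
          r.count_support_takeUntil_eq_one hxmem, ?_⟩
        have hsup : r.support = (r.takeUntil x hxmem).support ++ (r.dropUntil x hxmem).support.tail := by
          conv_lhs => rw [← r.take_spec hxmem]
          exact Walk.support_append _ _
        rw [hsup, List.count_append, r.count_support_takeUntil_eq_one hxmem] at hx2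
        omega
      have hlen2 : n = 1 + t.length + d.length := by
        rw [← hlen, Walk.length_cons, ← happ, Walk.length_append]; omega
      clear hlen happ hxmem hx2
      cases d with
      | nil => simp at hcd
      | @cons _ z _ h2 d' =>
        simp only [Walk.support_cons, List.tail_cons] at hcd
        have hx' : x ∈ d'.support := by rw [← List.count_pos_iff]; omega
        obtain ⟨t', d'', happ', hlen'⟩ :
            ∃ (t' : G.Walk z x) (d'' : G.Walk x u), t'.append d'' = d' ∧
              t'.length + d''.length = d'.length := by
          refine ⟨d'.takeUntil x hx', d'.dropUntil x hx', d'.take_spec hx', ?_⟩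
          conv_rhs => rw [← d'.take_spec hx']
          rw [Walk.length_append]
        set c1 : G.Walk x x := Walk.cons h2 t' with hc1
        set c2 : G.Walk u u := Walk.cons h (t.append d'') with hc2
        have hl1 : c1.length = t'.length + 1 := by rw [hc1, Walk.length_cons]
        have hl2 : c2.length = t.length + d''.length + 1 := by
          rw [hc2, Walk.length_cons, Walk.length_append]
        have hdl : d'.length + 1 = (Walk.cons h2 d').length := by rw [Walk.length_cons]
        have hsum : c1.length + c2.length = n := by
          rw [hl1, hl2]; rw [Walk.length_cons] at hlen2; omega
        rcases Nat.even_or_odd c1.length with he1 | ho1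
        · have ho2 : Odd c2.length := by
            rw [Nat.odd_iff] at hodd ⊢
            rw [Nat.even_iff] at he1
            omega
          exact IH c2.length (by omega) u c2 rfl ho2
        · exact IH c1.length (by omega) x c1 rfl ho1

noncomputable def groot (G : SimpleGraph V) (v : V) : V := (G.connectedComponentMk v).out

lemma groot_reachable (G : SimpleGraph V) (v : V) : G.Reachable (groot G v) v :=
  ConnectedComponent.eq.mp ((G.connectedComponentMk v).out_eq)

lemma groot_eq_of_adj {G : SimpleGraph V} {a b : V} (h : G.Adj a b) : groot G a = groot G b := by
  unfold groot
  rw [ConnectedComponent.eq.mpr h.reachable]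

noncomputable def gcol (G : SimpleGraph V) (v : V) : Bool :=
  Nat.bodd ((groot_reachable G v).some.length)

lemma gcol_ne {G : SimpleGraph V}
    (hno : ∀ (u : V) (w : G.Walk u u), ¬ Odd w.length)
    {a b : V} (h : G.Adj a b) : gcol G a ≠ gcol G b := by
  intro heq
  have hroot : groot G a = groot G b := groot_eq_of_adj h
  set wa := (groot_reachable G a).some with hwa
  set wb := (groot_reachable G b).some with hwb
  have hcl : G.Walk (groot G a) (groot G a) :=
    wa.append ((Walk.cons h wb.reverse).copy rfl hroot.symm)
  refine hno _ (wa.append ((Walk.cons h wb.reverse).copy rfl hroot.symm)) ?_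
  rw [Walk.length_append, Walk.length_copy, Walk.length_cons, Walk.length_reverse]
  unfold gcol at heq
  rw [← hwa, ← hwb] at heq
  rw [Nat.odd_iff]
  have h1 := Nat.mod_two_of_bodd wa.length
  have h2 := Nat.mod_two_of_bodd wb.length
  rw [heq] at h1
  rcases hbb : wb.length.bodd <;> rw [hbb] at h1 h2 <;> simp at h1 h2 <;> omega


lemma KE_of_coloring [Fintype V] (G : SimpleGraph V) (col : V → Bool)
    (hcol : ∀ a b : V, G.Adj a b → col a ≠ col b) :
    ∃ (S : Finset V) (M : Finset (Sym2 V)), AlmostBip.IsIndepSet G ↑S ∧ IsMatching G ↑M ∧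
      Fintype.card V ≤ S.card + M.card := by
  classical
  set X : Finset V := univ.filter (fun v => col v = true) with hX
  set Y : Finset V := univ.filter (fun v => ¬ col v = true) with hY
  have hXY : X.card + Y.card = Fintype.card V := by
    rw [hX, hY, card_filter_add_card_filter_not, card_univ]
  set Nb : Finset V → Finset V := fun A => univ.filter (fun y => ∃ a ∈ A, G.Adj a y) with hNb
  have hNbY : ∀ A : Finset V, A ⊆ X → Nb A ⊆ Y := by
    intro A hA y hy
    rw [hNb] at hy
    simp only [mem_filter, mem_univ, true_and] at hy
    obtain ⟨a, haA, hadj⟩ := hy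
    have hca : col a = true := by
      have := hA haA; rw [hX] at this; simpa using this
    rw [hY]
    simp only [mem_filter, mem_univ, true_and]
    intro hcy
    exact hcol a y hadj (by rw [hca, hcy])
  set dd : ℕ := X.powerset.sup (fun A => A.card - (Nb A).card) with hdd
  -- A₀ with exact deficiency
  obtain ⟨A₀, hA₀X, hA₀⟩ : ∃ A₀ : Finset V, A₀ ⊆ X ∧ (Nb A₀).card + dd = A₀.card := by
    by_cases h0 : dd = 0
    · refine ⟨∅, empty_subset _, ?_⟩
      rw [h0]
      simp [hNb]
    · obtain ⟨A₀, hA₀mem, hsup⟩ := Finset.exists_mem_eq_sup X.powerset ⟨∅, by simp⟩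
        (fun A => A.card - (Nb A).card)
      rw [← hdd] at hsup
      exact ⟨A₀, mem_powerset.mp hA₀mem, by omega⟩
  have hdle : ∀ A : Finset V, A ⊆ X → A.card ≤ (Nb A).card + dd := by
    intro A hA
    have := Finset.le_sup (f := fun A => A.card - (Nb A).card) (mem_powerset.mpr hA)
    rw [← hdd] at this
    omega
  -- Hall
  set r : ↥X → (V ⊕ Fin dd) → Prop :=
    fun x b => Sum.elim (fun y => G.Adj x.1 y) (fun _ => True) b with hr
  have hall : ∀ A : Finset ↥X,
      A.card ≤ (univ.filter fun b : V ⊕ Fin dd => ∃ a ∈ A, r a b).card := by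
    intro A
    rcases A.eq_empty_or_nonempty with rfl | hAne
    · simp
    set A' : Finset V := A.image (fun x => x.1) with hA'
    have hA'X : A' ⊆ X := by
      intro a ha
      rw [hA'] at ha
      obtain ⟨x, -, rfl⟩ := mem_image.mp ha
      exact x.2
    have hcards : A.card = A'.card := by
      rw [hA', card_image_of_injective _ Subtype.val_injective]
    have hsubset : ((Nb A').map ⟨Sum.inl, Sum.inl_injective⟩ ∪
        (univ : Finset (Fin dd)).map ⟨Sum.inr, Sum.inr_injective⟩)
        ⊆ (univ.filter fun b : V ⊕ Fin dd => ∃ a ∈ A, r a b) := by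
      intro b hb
      simp only [mem_union, mem_map, Function.Embedding.coeFn_mk] at hb
      simp only [mem_filter, mem_univ, true_and]
      rcases hb with ⟨y, hy, rfl⟩ | ⟨i, -, rfl⟩
      · rw [hNb] at hy
        simp only [mem_filter, mem_univ, true_and] at hy
        obtain ⟨a, haA', hadj⟩ := hy
        rw [hA'] at haA'
        obtain ⟨x, hxA, rfl⟩ := mem_image.mp haA'
        exact ⟨x, hxA, hadj⟩
      · obtain ⟨x, hx⟩ := hAne
        exact ⟨x, hx, trivial⟩
    have hdisj : Disjoint ((Nb A').map ⟨Sum.inl, Sum.inl_injective⟩)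
        ((univ : Finset (Fin dd)).map ⟨Sum.inr, Sum.inr_injective⟩) := by
      rw [Finset.disjoint_left]
      rintro b hb1 hb2
      simp only [mem_map, Function.Embedding.coeFn_mk] at hb1 hb2
      obtain ⟨y, -, rfl⟩ := hb1
      obtain ⟨i, -, h⟩ := hb2
      exact Sum.inl_ne_inr h.symm
    calc A.card = A'.card := hcards
      _ ≤ (Nb A').card + dd := hdle A' hA'X
      _ = ((Nb A').map ⟨Sum.inl, Sum.inl_injective⟩ ∪
        (univ : Finset (Fin dd)).map ⟨Sum.inr, Sum.inr_injective⟩).card := by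
          rw [card_union_of_disjoint hdisj, card_map, card_map, card_univ, Fintype.card_fin]
      _ ≤ _ := card_le_card hsubset
  obtain ⟨f, hfinj, hfr⟩ := (Fintype.all_card_le_filter_rel_iff_exists_injective r).mp hall
  set T : Finset ↥X := univ.filter (fun x => (f x).isLeft) with hT
  set g : ↥X → V := fun x => Sum.elim id (fun _ => x.1) (f x) with hg
  have hgT : ∀ x ∈ T, f x = Sum.inl (g x) := by
    intro x hx
    rw [hT] at hx
    simp only [mem_filter, mem_univ, true_and] at hx
    rcases hfx : f x with y | i
    · rw [hg]; simp [hfx]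
    · rw [hfx] at hx; simp at hx
  have hadjg : ∀ x ∈ T, G.Adj x.1 (g x) := by
    intro x hx
    have := hfr x
    rw [hgT x hx] at this
    exact this
  have hcolg : ∀ x ∈ T, col (g x) = false := by
    intro x hx
    have hcx : col x.1 = true := (mem_filter.mp x.2).2
    have := hcol _ _ (hadjg x hx)
    rw [hcx] at this
    exact Bool.eq_false_iff.mpr (fun hh => this hh.symm)
  -- card of T
  set Tc : Finset ↥X := univ.filter (fun x => ¬ (f x).isLeft = true) with hTc
  have hTc_card : Tc.card ≤ dd := by
    have himg : Tc.image f ⊆ (univ : Finset (Fin dd)).map ⟨Sum.inr, Sum.inr_injective⟩ := by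
      intro b hb
      obtain ⟨x, hx, rfl⟩ := mem_image.mp hb
      have hx' : ¬ (f x).isLeft = true := (mem_filter.mp hx).2
      rcases hfx : f x with y | i
      · rw [hfx] at hx'; simp at hx'
      · simp only [mem_map, Function.Embedding.coeFn_mk]
        exact ⟨i, mem_univ i, rfl⟩
    calc Tc.card = (Tc.image f).card := (card_image_of_injective _ hfinj).symm
      _ ≤ _ := card_le_card himg
      _ = dd := by rw [card_map, card_univ, Fintype.card_fin]
  have hTcard : X.card ≤ T.card + dd := by
    have hsplit : T.card + Tc.card = X.card := by
      rw [hT, hTc, card_filter_add_card_filter_not, card_univ, Fintype.card_coe]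
    omega
  -- the matching
  set M : Finset (Sym2 V) := T.image (fun x => s(x.1, g x)) with hM
  have hMcard : M.card = T.card := by
    rw [hM]
    apply card_image_of_injOn
    intro x1 h1 x2 h2 heq
    rw [Sym2.eq_iff] at heq
    rcases heq with ⟨ha, hb⟩ | ⟨ha, hb⟩
    · exact Subtype.ext ha
    · exfalso
      have h5 := hcolg x2 (by simpa using h2)
      have hcx : col x1.1 = true := (mem_filter.mp x1.2).2
      rw [← ha] at h5
      rw [hcx] at h5
      exact Bool.true_eq_false.mp h5
  have hMmatch : IsMatching G ↑M := by
    constructor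
    · intro e he
      simp only [hM, coe_image, Set.mem_image, mem_coe] at he
      obtain ⟨x, hx, rfl⟩ := he
      exact (hadjg x hx)
    · rintro e1 he1 e2 he2 hne z hz1 hz2
      simp only [hM, coe_image, Set.mem_image, mem_coe] at he1 he2
      obtain ⟨x1, hx1, rfl⟩ := he1
      obtain ⟨x2, hx2, rfl⟩ := he2
      rw [Sym2.mem_iff] at hz1 hz2
      have hcx1 : col x1.1 = true := (mem_filter.mp x1.2).2
      have hcx2 : col x2.1 = true := (mem_filter.mp x2.2).2
      have hcg1 := hcolg x1 hx1
      have hcg2 := hcolg x2 hx2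
      have hx12 : x1 ≠ x2 := by rintro rfl; exact hne rfl
      rcases hz1 with rfl | rfl <;> rcases hz2 with h | h
      · exact hx12 (Subtype.ext h)
      · rw [h, hcg2] at hcx1; exact Bool.false_eq_true.mp hcx1
      · rw [← h, hcg1] at hcx2; exact Bool.false_eq_true.mp hcx2
      · refine hx12 (hfinj ?_)
        rw [hgT x1 hx1, hgT x2 hx2, h]
  -- the independent set
  set S : Finset V := A₀ ∪ (Y \ Nb A₀) with hS
  have hcolA₀ : ∀ a ∈ A₀, col a = true := fun a ha => (mem_filter.mp (hA₀X ha)).2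
  have hcolY : ∀ a ∈ Y, col a = false :=
    fun a ha => Bool.eq_false_iff.mpr (mem_filter.mp ha).2
  have hNbmem : ∀ {p q : V}, p ∈ A₀ → G.Adj p q → q ∈ Nb A₀ := by
    intro p q hp hpq
    rw [hNb]
    simp only [mem_filter, mem_univ, true_and]
    exact ⟨p, hp, hpq⟩
  have hSindep : AlmostBip.IsIndepSet G ↑S := by
    intro a ha b hb hne hadj
    simp only [hS, coe_union, coe_sdiff, Set.mem_union, Set.mem_diff, mem_coe] at ha hb
    rcases ha with ha | ⟨haY, haN⟩ <;> rcases hb with hb | ⟨hbY, hbN⟩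
    · exact hcol a b hadj (by rw [hcolA₀ a ha, hcolA₀ b hb])
    · exact hbN (hNbmem ha hadj)
    · exact haN (hNbmem hb hadj.symm)
    · exact hcol a b hadj (by rw [hcolY a haY, hcolY b hbY])
  have hNbA₀Y : Nb A₀ ⊆ Y := hNbY A₀ hA₀X
  have hdisjS : Disjoint A₀ (Y \ Nb A₀) := by
    rw [Finset.disjoint_left]
    intro a ha ha'
    have h1 := hcolA₀ a ha
    have h2 := hcolY a (mem_sdiff.mp ha').1
    rw [h1] at h2
    exact Bool.true_eq_false.mp h2
  have hScard : S.card = A₀.card + (Y.card - (Nb A₀).card) := by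
    rw [hS, card_union_of_disjoint hdisjS, card_sdiff_of_subset hNbA₀Y]
  have hNbA₀card : (Nb A₀).card ≤ Y.card := card_le_card hNbA₀Y
  refine ⟨S, M, hSindep, hMmatch, ?_⟩
  omega


lemma indep_empty (G : SimpleGraph V) : AlmostBip.IsIndepSet G (∅ : Set V) := Set.pairwise_empty _

lemma matching_empty (G : SimpleGraph V) : IsMatching G (∅ : Set (Sym2 V)) :=
  ⟨Set.empty_subset _, Set.pairwise_empty _⟩

lemma alpha_bdd [Fintype V] (G : SimpleGraph V) :
    BddAbove {n | ∃ s : Set V, AlmostBip.IsIndepSet G s ∧ s.ncard = n} := by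
  refine ⟨Nat.card V, fun n hn => ?_⟩
  obtain ⟨s, -, rfl⟩ := hn
  rw [← Set.ncard_univ]
  exact Set.ncard_le_ncard (Set.subset_univ s) Set.finite_univ

lemma mu_bdd [Fintype V] (G : SimpleGraph V) :
    BddAbove {n | ∃ M : Set (Sym2 V), IsMatching G M ∧ M.ncard = n} := by
  refine ⟨Nat.card (Sym2 V), fun n hn => ?_⟩
  obtain ⟨M, -, rfl⟩ := hn
  rw [← Set.ncard_univ]
  exact Set.ncard_le_ncard (Set.subset_univ M) Set.finite_univ

lemma le_alpha [Fintype V] {G : SimpleGraph V} {s : Set V} (h : AlmostBip.IsIndepSet G s) :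
    s.ncard ≤ alpha G := le_csSup (alpha_bdd G) ⟨s, h, rfl⟩

lemma le_mu [Fintype V] {G : SimpleGraph V} {M : Set (Sym2 V)} (h : IsMatching G M) :
    M.ncard ≤ mu G := le_csSup (mu_bdd G) ⟨M, h, rfl⟩

lemma alpha_spec [Fintype V] (G : SimpleGraph V) :
    ∃ s : Set V, AlmostBip.IsIndepSet G s ∧ s.ncard = alpha G :=
  Nat.sSup_mem (s := {n | ∃ s : Set V, AlmostBip.IsIndepSet G s ∧ s.ncard = n})
    ⟨0, ⟨∅, indep_empty G, Set.ncard_empty _⟩⟩ (alpha_bdd G)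

lemma mu_spec [Fintype V] (G : SimpleGraph V) :
    ∃ M : Set (Sym2 V), IsMatching G M ∧ M.ncard = mu G :=
  Nat.sSup_mem (s := {n | ∃ M : Set (Sym2 V), IsMatching G M ∧ M.ncard = n})
    ⟨0, ⟨∅, matching_empty G, Set.ncard_empty _⟩⟩ (mu_bdd G)

lemma indep_matching_card_le [Fintype V] (G : SimpleGraph V)
    {S : Set V} (hS : AlmostBip.IsIndepSet G S) {M : Set (Sym2 V)} (hM : IsMatching G M) :
    S.ncard + M.ncard ≤ Nat.card V := by
  classical
  have hkey : ∀ e ∈ M, ∃ x, x ∈ e ∧ x ∉ S := by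
    intro e he
    have hedge : e ∈ G.edgeSet := hM.1 he
    revert hedge
    refine Sym2.ind (fun a b hedge => ?_) e
    rw [mem_edgeSet] at hedge
    by_contra hcon
    push_neg at hcon
    have ha : a ∈ S := hcon a (Sym2.mem_mk_left a b)
    have hb : b ∈ S := hcon b (Sym2.mem_mk_right a b)
    exact hS ha hb hedge.ne hedge
  set f : Sym2 V → V := fun e => if h : ∃ x, x ∈ e ∧ x ∉ S then h.choose else (Quot.out e).1
    with hf
  have hfmem : ∀ e ∈ M, f e ∈ e ∧ f e ∉ S := by
    intro e he
    have h := hkey e he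
    rw [hf]
    simp only [h, dif_pos]
    exact h.choose_spec
  have hinj : Set.InjOn f M := by
    intro e1 h1 e2 h2 heq
    by_contra hne
    have := hM.2 h1 h2 hne (f e1) (hfmem e1 h1).1
    rw [heq] at this
    exact this (hfmem e2 h2).1
  have hle : M.ncard ≤ Sᶜ.ncard := by
    refine Set.ncard_le_ncard_of_injOn f (fun e he => (hfmem e he).2) hinj (Set.toFinite _)
  have := Set.ncard_add_ncard_compl S (Set.toFinite _) (Set.toFinite _)
  omega

end AlmostBipAux

open AlmostBipAux SimpleGraph Finset

/-- If `G` is an almost bipartite graph, then `|V(G)| - 1 ≤ α(G) + μ(G) ≤ |V(G)|`. -/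
theorem stmt_1 {V : Type*} [Fintype V] (G : SimpleGraph V)
    (hG : AlmostBipartite G) :
    Nat.card V - 1 ≤ alpha G + mu G ∧ alpha G + mu G ≤ Nat.card V := by
  classical
  constructor
  · -- lower bound
    obtain ⟨v, c, ⟨⟨hcyc, hoddc⟩, huniq⟩⟩ := hG
    set G' : SimpleGraph V := G.deleteEdges {e | v ∈ e} with hG'
    have hle : G' ≤ G := deleteEdges_le _
    have hnc : ∀ (u : V) (c' : G'.Walk u u), c'.IsCycle → ¬ Odd c'.length := by
      intro u c' hcyc' hodd'
      have hcG : (c'.mapLe hle).IsCycle := hcyc'.mapLe hle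
      have hoddG : Odd (c'.mapLe hle).length := by
        rwa [Walk.mapLe, Walk.length_map]
      have hedges := huniq u (c'.mapLe hle) ⟨hcG, hoddG⟩
      obtain ⟨w, hw⟩ : ∃ w, s(v, w) ∈ c.edges := by
        cases c with
        | nil => exact absurd rfl hcyc.ne_nil
        | cons h p => exact ⟨_, by rw [Walk.edges_cons]; exact List.mem_cons_self⟩
      have hw' : s(v, w) ∈ (c'.mapLe hle).edges := by
        have : s(v, w) ∈ {e | e ∈ c.edges} := hw
        rwa [← hedges] at this
      have hw'' : s(v, w) ∈ c'.edges := by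
        rw [Walk.mapLe, Walk.edges_map] at hw'
        simpa using hw'
      have hws : s(v, w) ∈ G'.edgeSet := c'.edges_subset_edgeSet hw''
      rw [hG', edgeSet_deleteEdges] at hws
      exact hws.2 (Sym2.mem_mk_left v w)
    have hno : ∀ (u : V) (w : G'.Walk u u), ¬ Odd w.length :=
      fun u w => no_odd_closed_walk hnc w.length u w rfl
    obtain ⟨S', M', hS', hM', hcard⟩ :=
      KE_of_coloring G' (gcol G') (fun a b hab => gcol_ne hno hab)
    have hM'G : IsMatching G ↑M' := by
      refine ⟨fun e he => ?_, hM'.2⟩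
      have h1 := hM'.1 he
      rw [hG', edgeSet_deleteEdges] at h1
      exact h1.1
    have hmu : M'.card ≤ mu G := by
      have h2 := le_mu hM'G
      rwa [Set.ncard_coe_finset] at h2
    have hSe : AlmostBip.IsIndepSet G ↑(S'.erase v) := by
      intro a ha b hb hne hadj
      rw [coe_erase, Set.mem_diff] at ha hb
      refine hS' ha.1 hb.1 hne ?_
      rw [hG', deleteEdges_adj]
      refine ⟨hadj, ?_⟩
      rw [Set.mem_setOf_eq, Sym2.mem_iff]
      push_neg
      refine ⟨?_, ?_⟩
      · intro h; exact ha.2 (by simpa using h.symm)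
      · intro h; exact hb.2 (by simpa using h.symm)
    have halpha : (S'.erase v).card ≤ alpha G := by
      have h3 := le_alpha hSe
      rwa [Set.ncard_coe_finset] at h3
    have herase : S'.card - 1 ≤ (S'.erase v).card := pred_card_le_card_erase
    rw [Nat.card_eq_fintype_card]
    omega
  · -- upper bound
    obtain ⟨S, hS, hSc⟩ := alpha_spec G
    obtain ⟨M, hM, hMc⟩ := mu_spec G
    rw [← hSc, ← hMc]
    exact indep_matching_card_le G hS hM
end

section
/- If G is an almost bipartite graph with unique odd cycle C, then α(G) + μ(G) = |V(G)| − 1 if and only if every edge of C is α-critical. -/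
open AlmostBip

namespace AlmostBip

open SimpleGraph Walk

section Aux

variable {V : Type*}

section Basic
variable [Fintype V] (G : SimpleGraph V)

lemma alpha_spec : ∃ s : Set V, IsIndepSet G s ∧ s.ncard = alpha G := by
  have h0 : 0 ∈ {n | ∃ s : Set V, IsIndepSet G s ∧ s.ncard = n} :=
    ⟨∅, by simp [IsIndepSet], by simp⟩
  have hbdd : BddAbove {n | ∃ s : Set V, IsIndepSet G s ∧ s.ncard = n} := by
    refine ⟨Fintype.card V, ?_⟩
    rintro n ⟨s, -, rfl⟩
    simpa [Set.ncard_univ] using Set.ncard_le_ncard (Set.subset_univ s) Set.finite_univ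
  exact Nat.sSup_mem ⟨0, h0⟩ hbdd

lemma le_alpha {s : Set V} (hs : IsIndepSet G s) : s.ncard ≤ alpha G := by
  have hbdd : BddAbove {n | ∃ s : Set V, IsIndepSet G s ∧ s.ncard = n} := by
    refine ⟨Fintype.card V, ?_⟩
    rintro n ⟨s, -, rfl⟩
    simpa [Set.ncard_univ] using Set.ncard_le_ncard (Set.subset_univ s) Set.finite_univ
  exact le_csSup hbdd ⟨s, hs, rfl⟩

lemma mu_spec : ∃ M : Set (Sym2 V), IsMatching G M ∧ M.ncard = mu G := by
  classical
  have h0 : 0 ∈ {n | ∃ M : Set (Sym2 V), IsMatching G M ∧ M.ncard = n} :=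
    ⟨∅, ⟨by simp, by simp⟩, by simp⟩
  have hbdd : BddAbove {n | ∃ M : Set (Sym2 V), IsMatching G M ∧ M.ncard = n} := by
    refine ⟨Fintype.card (Sym2 V), ?_⟩
    rintro n ⟨M, -, rfl⟩
    simpa [Set.ncard_univ] using Set.ncard_le_ncard (Set.subset_univ M) Set.finite_univ
  exact Nat.sSup_mem ⟨0, h0⟩ hbdd

lemma le_mu {M : Set (Sym2 V)} (hM : IsMatching G M) : M.ncard ≤ mu G := by
  classical
  have hbdd : BddAbove {n | ∃ M : Set (Sym2 V), IsMatching G M ∧ M.ncard = n} := by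
    refine ⟨Fintype.card (Sym2 V), ?_⟩
    rintro n ⟨M, -, rfl⟩
    simpa [Set.ncard_univ] using Set.ncard_le_ncard (Set.subset_univ M) Set.finite_univ
  exact le_csSup hbdd ⟨M, hM, rfl⟩

variable {G}

lemma IsIndepSet.mono {G' : SimpleGraph V} (h : G' ≤ G) {s : Set V}
    (hs : IsIndepSet G s) : IsIndepSet G' s :=
  fun a ha b hb hab hadj => hs ha hb hab (h hadj)

lemma alpha_le_alpha {G' : SimpleGraph V} (h : G' ≤ G) : alpha G ≤ alpha G' := by
  obtain ⟨s, hs, hcard⟩ := alpha_spec G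
  exact hcard ▸ le_alpha G' (hs.mono h)

lemma mu_le_mu {G' : SimpleGraph V} (h : G' ≤ G) : mu G' ≤ mu G := by
  obtain ⟨M, hM, hcard⟩ := mu_spec G'
  refine hcard ▸ le_mu G ⟨fun e he => ?_, hM.2⟩
  exact edgeSet_mono h (hM.1 he)

/-- Gallai-type bound : `α(G) + μ(G) ≤ |V|`. -/
lemma alpha_add_mu_le : alpha G + mu G ≤ Fintype.card V := by
  classical
  obtain ⟨S, hS, hScard⟩ := alpha_spec G
  obtain ⟨M, hM, hMcard⟩ := mu_spec G
  have hch : ∀ m ∈ M, ∃ x, x ∈ m ∧ x ∉ S := by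
    intro m hm
    have hms := hM.1 hm
    induction m with
    | h a b =>
      rw [SimpleGraph.mem_edgeSet] at hms
      by_cases ha : a ∈ S
      · by_cases hb : b ∈ S
        · exact absurd hms (hS ha hb hms.ne)
        · exact ⟨b, by simp, hb⟩
      · exact ⟨a, by simp, ha⟩
  by_cases hMe : M = ∅
  · have : M.ncard = 0 := by simp [hMe]
    have h2 : S.ncard ≤ Fintype.card V := by
      simpa [Set.ncard_univ] using Set.ncard_le_ncard (Set.subset_univ S) Set.finite_univ
    omega
  obtain ⟨m0, hm0⟩ := Set.nonempty_iff_ne_empty.2 hMe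
  haveI : Nonempty V := ⟨m0.out.1⟩
  choose g hg1 hg2 using hch
  have hinj : Set.InjOn (fun m => if hm : m ∈ M then g m hm else Classical.arbitrary V) M := by
    intro m1 h1 m2 h2 heq
    simp only [dif_pos h1, dif_pos h2] at heq
    by_contra hne
    exact (hM.2 h1 h2 hne) (g m1 h1) (hg1 m1 h1) (heq ▸ hg1 m2 h2)
  have himg : (fun m => if hm : m ∈ M then g m hm else Classical.arbitrary V) '' M ⊆ Sᶜ := by
    rintro x ⟨m, hm, rfl⟩
    simp only [dif_pos hm]
    exact hg2 m hm
  have h1 : M.ncard ≤ Sᶜ.ncard := by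
    rw [← Set.ncard_image_of_injOn hinj]
    exact Set.ncard_le_ncard himg (Set.toFinite _)
  have h2 : S.ncard + Sᶜ.ncard = Fintype.card V := by
    rw [Set.ncard_add_ncard_compl]
    simp [Set.ncard_univ]
  omega

end Basic

lemma indep_del_sub {G : SimpleGraph V} (e : Sym2 V) {T : Set V}
    (hT : IsIndepSet (G.deleteEdges {e}) T) (x : V) (hx : x ∈ e) :
    IsIndepSet G (T \ {x}) := by
  rintro a ⟨ha, hax⟩ b ⟨hb, hbx⟩ hab hadj
  have := hT ha hb hab
  simp only [deleteEdges_adj] at this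
  have he : s(a, b) ∈ ({e} : Set (Sym2 V)) := by
    by_contra h
    exact this ⟨hadj, h⟩
  simp only [Set.mem_singleton_iff] at he
  subst he
  simp only [Sym2.mem_iff] at hx
  simp only [Set.mem_singleton_iff] at hax hbx
  rcases hx with rfl | rfl
  · exact hax rfl
  · exact hbx rfl

lemma alpha_del_le [Fintype V] {G : SimpleGraph V} (e : Sym2 V) :
    alpha (G.deleteEdges {e}) ≤ alpha G + 1 := by
  obtain ⟨T, hT, hTcard⟩ := alpha_spec (G.deleteEdges {e})
  set x := e.out.1 with hxdef
  have hx : x ∈ e := Sym2.out_fst_mem e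
  have h1 := le_alpha G (indep_del_sub e hT x hx)
  have h2 : T.ncard ≤ (T \ {x}).ncard + 1 := by
    by_cases hxT : x ∈ T
    · rw [Set.ncard_diff_singleton_add_one hxT (Set.toFinite _)]
    · rw [Set.diff_singleton_eq_self hxT]; omega
  omega

/-- If `G` has no odd cycle, then every closed walk has even length. -/
lemma no_odd_closed_walk {G : SimpleGraph V}
    (hnc : ∀ (u : V) (w : G.Walk u u), w.IsCycle → ¬ Odd w.length) :
    ∀ (u : V) (w : G.Walk u u), ¬ Odd w.length := by
  classical
  intro u w
  generalize hn : w.length = n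
  induction n using Nat.strong_induction_on generalizing u w with
  | _ n ih =>
  intro hodd
  subst hn
  cases w with
  | nil => simp at hodd
  | cons h rest =>
    rename_i b
    by_cases hnodup : rest.support.Nodup
    · have hpath : rest.IsPath := IsPath.mk' hnodup
      by_cases hedge : s(u, b) ∈ rest.edges
      · have hrev : s(u, b) ∈ rest.reverse.edges := by
          rw [edges_reverse]; simpa using hedge
        have hrevpath : rest.reverse.IsPath := hpath.reverse
        cases hrev2 : rest.reverse with
        | nil =>
          exfalso
          rw [hrev2] at hrev; simp at hrev
        | cons h' q =>
          rename_i cv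
          rw [hrev2] at hrev hrevpath
          have hq : u ∉ q.support := by
            have := hrevpath.support_nodup
            simp only [support_cons, List.nodup_cons] at this
            exact this.1
          simp only [edges_cons, List.mem_cons] at hrev
          rcases hrev with heq | hmem
          · have hcb : cv = b := by
              rw [Sym2.eq_iff] at heq
              rcases heq with ⟨-, rfl⟩ | ⟨rfl, rfl⟩
              · rfl
              · exfalso; exact hq q.start_mem_support
            subst hcb
            have hqnil : q.Nil := by
              have := hrevpath.support_nodup
              cases q with
              | nil => exact nil_nil
              | cons h'' q' =>
                exfalso
                simp only [support_cons, List.nodup_cons] at this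
                exact this.2.1 (q'.end_mem_support)
            have : rest.length = 1 := by
              have h1 : rest.reverse.length = 1 := by
                rw [hrev2]
                simp [hqnil.eq_nil]
              simpa using h1
            rw [length_cons, this] at hodd
            exact (by decide : ¬ Odd 2) hodd
          · exfalso
            exact hq (q.fst_mem_support_of_mem_edges hmem)
      · exact hnc u (cons h rest) ((cons_isCycle_iff rest h).2 ⟨hpath, hedge⟩) hodd
    · obtain ⟨x, hdup⟩ := List.exists_duplicate_iff_not_nodup.2 hnodup
      have hcount : 2 ≤ rest.support.count x := List.duplicate_iff_two_le_count.mp hdup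
      have hx : x ∈ rest.support := hdup.mem
      set q1 := rest.takeUntil x hx with hq1
      set q2 := rest.dropUntil x hx with hq2
      have hspec : q1.append q2 = rest := rest.take_spec hx
      have hcount1 : q1.support.count x = 1 := rest.count_support_takeUntil_eq_one hx
      have hxq2 : x ∈ q2.support.tail := by
        have : rest.support.count x = q1.support.count x + q2.support.tail.count x := by
          rw [← hspec, support_append, List.count_append]
        rw [hcount1] at this
        exact List.count_pos_iff.1 (by omega)
      cases hq2e : q2 with
      | nil => rw [hq2e] at hxq2; simp at hxq2
      | cons h2 q3 =>
        rename_i z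
        rw [hq2e] at hxq2
        have hxq3 : x ∈ q3.support := by simpa using hxq2
        set inner : G.Walk x x := Walk.cons h2 (q3.takeUntil x hxq3) with hinner
        set outer : G.Walk u u := (Walk.cons h q1).append (q3.dropUntil x hxq3) with houter
        have hlen : inner.length + outer.length = (Walk.cons h rest).length := by
          have h3 : (q3.takeUntil x hxq3).length + (q3.dropUntil x hxq3).length = q3.length := by
            rw [← length_append, q3.take_spec hxq3]
          have h4 : q1.length + q2.length = rest.length := by
            rw [← length_append, hspec]
          rw [hq2e] at h4
          simp only [hinner, houter, length_cons, length_append] at *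
          omega
        have hinner1 : 1 ≤ inner.length := by simp [hinner]
        have houter1 : 1 ≤ outer.length := by simp [houter, length_append]
        have hsum : (inner.length + outer.length) % 2 = 1 := by
          rw [hlen]; exact Nat.odd_iff.mp hodd
        by_cases hip : inner.length % 2 = 1
        · exact ih inner.length (by omega) x inner rfl (Nat.odd_iff.mpr hip)
        · exact ih outer.length (by omega) u outer rfl (Nat.odd_iff.mpr (by omega))

lemma walk_parity_const {G : SimpleGraph V}
    (hno : ∀ (u : V) (w : G.Walk u u), ¬ Odd w.length)
    {a b : V} (p q : G.Walk a b) : (Odd p.length ↔ Odd q.length) := by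
  have h2 := hno a (p.append q.reverse)
  rw [length_append, length_reverse] at h2
  simp only [Nat.odd_iff] at h2 ⊢
  omega

/-- From "no odd closed walk" we get a proper 2-colouring. -/
lemma exists_two_coloring {G : SimpleGraph V}
    (hno : ∀ (u : V) (w : G.Walk u u), ¬ Odd w.length) :
    ∃ f : V → Bool, ∀ a b : V, G.Adj a b → f a ≠ f b := by
  classical
  set f : V → Bool :=
    fun x => decide (∃ p : G.Walk (G.connectedComponentMk x).out x, Odd p.length) with hf
  have key : ∀ (x : V) (q : G.Walk (G.connectedComponentMk x).out x),
      (f x = true ↔ Odd q.length) := by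
    intro x q
    rw [hf]
    simp only [decide_eq_true_eq]
    constructor
    · rintro ⟨p', hp'⟩; exact (walk_parity_const hno p' q).1 hp'
    · exact fun h => ⟨q, h⟩
  refine ⟨f, ?_⟩
  intro a b hadj hcon
  have hcomp : G.connectedComponentMk a = G.connectedComponentMk b :=
    ConnectedComponent.eq.2 hadj.reachable
  have hout : (G.connectedComponentMk b).out = (G.connectedComponentMk a).out := by
    rw [hcomp]
  have hra : G.Reachable (G.connectedComponentMk a).out a :=
    ConnectedComponent.eq.1 ((G.connectedComponentMk a).out_eq)
  obtain ⟨p⟩ := hra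
  have ha := key a p
  have hb := key b ((p.append (Walk.cons hadj Walk.nil)).copy hout.symm rfl)
  rw [hcon] at ha
  rw [length_copy, length_append, length_cons, length_nil] at hb
  simp only [Nat.odd_iff] at ha hb
  by_cases h : f b = true
  · rw [h] at ha hb; simp at ha hb; omega
  · simp only [Bool.not_eq_true] at h
    rw [h] at ha hb; simp at ha hb; omega

variable [Fintype V] {G : SimpleGraph V}

lemma konig_ge {f : V → Bool} (hf : ∀ a b : V, G.Adj a b → f a ≠ f b) :
    Fintype.card V ≤ alpha G + mu G := by
  classical
  set A : Finset V := Finset.univ.filter (fun x => f x = true) with hA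
  set B : Finset V := Finset.univ.filter (fun x => f x = false) with hB
  have hAmem : ∀ x, x ∈ A ↔ f x = true := by intro x; simp [hA]
  have hBmem : ∀ x, x ∈ B ↔ f x = false := by intro x; simp [hB]
  have hAB : A.card + B.card = Fintype.card V := by
    rw [hA, hB]
    rw [← Finset.card_univ]
    have := Finset.card_filter_add_card_filter_not
      (s := (Finset.univ : Finset V)) (p := fun x => f x = true)
    simp only [Bool.not_eq_true] at this
    convert this using 3
  set N : Finset V → Finset V := fun S => B.filter (fun b => ∃ a ∈ S, G.Adj a b) with hN
  have hNmem : ∀ S b, b ∈ N S ↔ (f b = false ∧ ∃ a ∈ S, G.Adj a b) := by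
    intro S b; simp [hN, hBmem]
  have hNsub : ∀ S, N S ⊆ B := fun S => Finset.filter_subset _ _
  set d : ℕ := (A.powerset).sup (fun S => S.card - (N S).card) with hd
  have hle : ∀ S : Finset V, S ⊆ A → S.card ≤ (N S).card + d := by
    intro S hS
    have := Finset.le_sup (f := fun S => S.card - (N S).card)
      (Finset.mem_powerset.2 hS)
    rw [← hd] at this
    omega
  -- (i) B.card + d ≤ alpha G
  have halpha : B.card + d ≤ alpha G := by
    obtain ⟨S₀, hS₀mem, hS₀⟩ := Finset.exists_mem_eq_sup (A.powerset)
      ⟨∅, by simp⟩ (fun S => S.card - (N S).card)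
    rw [← hd] at hS₀
    have hS₀A : S₀ ⊆ A := Finset.mem_powerset.1 hS₀mem
    have hBindep : IsIndepSet G (↑B : Set V) := by
      intro x hx y hy hxy hadj
      simp only [Finset.coe_sort_coe, Finset.mem_coe] at hx hy
      exact hf x y hadj (by rw [(hBmem x).1 hx, (hBmem y).1 hy])
    by_cases hd0 : d = 0
    · have := le_alpha G hBindep
      rw [Set.ncard_coe_finset] at this
      omega
    · have hnc : (N S₀).card < S₀.card := by omega
      set I : Finset V := S₀ ∪ (B \ N S₀) with hI
      have hIindep : IsIndepSet G (↑I : Set V) := by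
        intro x hx y hy hxy hadj
        simp only [Finset.mem_coe, hI, Finset.mem_union, Finset.mem_sdiff] at hx hy
        rcases hx with hx | ⟨hxB, hxN⟩ <;> rcases hy with hy | ⟨hyB, hyN⟩
        · exact hf x y hadj (by
            rw [(hAmem x).1 (hS₀A hx), (hAmem y).1 (hS₀A hy)])
        · exact hyN ((hNmem S₀ y).2 ⟨(hBmem y).1 hyB, x, hx, hadj⟩)
        · exact hxN ((hNmem S₀ x).2 ⟨(hBmem x).1 hxB, y, hy, hadj.symm⟩)
        · exact hf x y hadj (by rw [(hBmem x).1 hxB, (hBmem y).1 hyB])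
      have hdisj : Disjoint S₀ (B \ N S₀) := by
        refine Finset.disjoint_left.2 fun x hx hx' => ?_
        rw [Finset.mem_sdiff] at hx'
        have h1 := (hAmem x).1 (hS₀A hx)
        have h2 := (hBmem x).1 hx'.1
        rw [h1] at h2; exact Bool.noConfusion h2
      have hcard : I.card = S₀.card + (B.card - (N S₀).card) := by
        rw [hI, Finset.card_union_of_disjoint hdisj, Finset.card_sdiff_of_subset (hNsub S₀)]
      have hNB : (N S₀).card ≤ B.card := Finset.card_le_card (hNsub S₀)
      have := le_alpha G hIindep
      rw [Set.ncard_coe_finset] at this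
      omega
  -- (ii) A.card ≤ mu G + d
  have hmu : A.card ≤ mu G + d := by
    set nbr : ↥A → Finset V := fun a => N {a.val} with hnbr
    set t : ↥A → Finset (V ⊕ Fin d) :=
      fun a => (nbr a).image Sum.inl ∪ (Finset.univ : Finset (Fin d)).image Sum.inr with ht
    have hhall : ∀ s : Finset ↥A, s.card ≤ (s.biUnion t).card := by
      intro s
      rcases s.eq_empty_or_nonempty with rfl | ⟨a₀, ha₀⟩
      · simp
      set S' : Finset V := s.image Subtype.val with hS'
      have hS'A : S' ⊆ A := by
        rintro x hx
        rw [hS', Finset.mem_image] at hx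
        obtain ⟨a, -, rfl⟩ := hx
        exact a.2
      have hbu : s.biUnion t = ((s.biUnion nbr).image Sum.inl) ∪
          (Finset.univ : Finset (Fin d)).image Sum.inr := by
        ext x
        simp only [Finset.mem_biUnion, ht, Finset.mem_union, Finset.mem_image]
        constructor
        · rintro ⟨a, ha, hx⟩
          rcases hx with ⟨b, hb, rfl⟩ | ⟨k, hk, rfl⟩
          · exact Or.inl ⟨b, ⟨a, ha, hb⟩, rfl⟩
          · exact Or.inr ⟨k, hk, rfl⟩
        · rintro (⟨b, ⟨a, ha, hb⟩, rfl⟩ | ⟨k, hk, rfl⟩)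
          · exact ⟨a, ha, Or.inl ⟨b, hb, rfl⟩⟩
          · exact ⟨a₀, ha₀, Or.inr ⟨k, hk, rfl⟩⟩
      have hdisj : Disjoint ((s.biUnion nbr).image Sum.inl)
          ((Finset.univ : Finset (Fin d)).image Sum.inr) := by
        refine Finset.disjoint_left.2 ?_
        rintro x hx hx'
        rw [Finset.mem_image] at hx hx'
        obtain ⟨b, -, rfl⟩ := hx
        obtain ⟨k, -, hk⟩ := hx'
        cases hk
      have hbn : s.biUnion nbr = N S' := by
        ext b
        simp only [Finset.mem_biUnion, hnbr, hNmem, hS', Finset.mem_image,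
          Finset.mem_singleton]
        constructor
        · rintro ⟨a, ha, hbf, x, rfl, hadj⟩
          exact ⟨hbf, a.val, ⟨a, ha, rfl⟩, hadj⟩
        · rintro ⟨hbf, x, ⟨a, ha, rfl⟩, hadj⟩
          exact ⟨a, ha, hbf, a.val, rfl, hadj⟩
      rw [hbu, Finset.card_union_of_disjoint hdisj,
        Finset.card_image_of_injective _ Sum.inl_injective,
        Finset.card_image_of_injective _ Sum.inr_injective, hbn, Finset.card_univ,
        Fintype.card_fin]
      have hsc : s.card = S'.card := by
        rw [hS', Finset.card_image_of_injective _ Subtype.val_injective]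
      rw [hsc]
      exact hle S' hS'A
    obtain ⟨F, hFinj, hFmem⟩ :=
      (Finset.all_card_le_biUnion_card_iff_existsInjective' t).1 hhall
    -- properties of F
    have hFadj : ∀ (a : ↥A) (b : V), F a = Sum.inl b → G.Adj a.val b ∧ f b = false := by
      intro a b hab
      have := hFmem a
      rw [hab, ht] at this
      simp only [Finset.mem_union, Finset.mem_image] at this
      rcases this with ⟨b', hb', heq⟩ | ⟨k, -, heq⟩
      · obtain rfl : b' = b := Sum.inl_injective heq
        rw [hnbr, hNmem] at hb'
        obtain ⟨hbf, x, hx, hadj⟩ := hb'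
        rw [Finset.mem_singleton] at hx
        subst hx
        exact ⟨hadj, hbf⟩
      · cases heq
    set M : Set (Sym2 V) :=
      {m | ∃ (a : ↥A) (b : V), F a = Sum.inl b ∧ m = s(a.val, b)} with hM
    have hfa : ∀ a : ↥A, f a.val = true := fun a => (hAmem a.val).1 a.2
    have hMmatch : IsMatching G M := by
      constructor
      · rintro m ⟨a, b, hab, rfl⟩
        rw [SimpleGraph.mem_edgeSet]
        exact (hFadj a b hab).1
      · rintro m₁ ⟨a₁, b₁, hab₁, rfl⟩ m₂ ⟨a₂, b₂, hab₂, rfl⟩ hne x hx₁ hx₂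
        simp only [Sym2.mem_iff] at hx₁ hx₂
        have hb₁ := (hFadj a₁ b₁ hab₁).2
        have hb₂ := (hFadj a₂ b₂ hab₂).2
        have ha₁ := hfa a₁
        have ha₂ := hfa a₂
        rcases hx₁ with rfl | rfl <;> rcases hx₂ with h | h
        · -- a₁.val = a₂.val
          have : a₁ = a₂ := Subtype.ext h
          subst this
          rw [hab₁] at hab₂
          obtain rfl : b₁ = b₂ := Sum.inl_injective hab₂
          exact hne rfl
        · rw [h] at ha₁; rw [ha₁] at hb₂; exact Bool.noConfusion hb₂
        · rw [← h] at ha₂; rw [ha₂] at hb₁; exact Bool.noConfusion hb₁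
        · -- b₁ = b₂
          subst h
          have : a₁ = a₂ := hFinj (hab₁.trans hab₂.symm)
          subst this
          exact hne rfl
    -- cardinality of M
    set Aset : Set ↥A := {a | ∃ b : V, F a = Sum.inl b} with hAset
    set g : ↥A → Sym2 V :=
      fun a => (F a).elim (fun b => s(a.val, b)) (fun _ => s(a.val, a.val)) with hg
    have hMimg : M = g '' Aset := by
      ext m
      constructor
      · rintro ⟨a, b, hab, rfl⟩
        exact ⟨a, ⟨b, hab⟩, by rw [hg]; simp only [hab]; rfl⟩
      · rintro ⟨a, ⟨b, hab⟩, rfl⟩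
        exact ⟨a, b, hab, by rw [hg]; simp only [hab]; rfl⟩
    have hginj : Set.InjOn g Aset := by
      rintro a₁ ⟨b₁, hab₁⟩ a₂ ⟨b₂, hab₂⟩ heq
      rw [hg] at heq
      simp only [hab₁, hab₂] at heq
      change s(a₁.val, b₁) = s(a₂.val, b₂) at heq
      rw [Sym2.eq_iff] at heq
      have hb₁ := (hFadj a₁ b₁ hab₁).2
      have hb₂ := (hFadj a₂ b₂ hab₂).2
      have ha₁ := hfa a₁
      have ha₂ := hfa a₂
      rcases heq with ⟨h1, -⟩ | ⟨h1, h2⟩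
      · exact Subtype.ext h1
      · rw [h1] at ha₁; rw [ha₁] at hb₂; exact Bool.noConfusion hb₂
    have hMcard : M.ncard = Aset.ncard := by
      rw [hMimg, Set.ncard_image_of_injOn hginj]
    -- complement of Aset injects into Fin d
    have hcompl : Asetᶜ.ncard ≤ d := by
      set k : ↥A → Fin d ⊕ Unit := fun a => (F a).elim (fun _ => Sum.inr ()) Sum.inl with hk
      have hmemc : ∀ a : ↥A, a ∈ Asetᶜ → ∃ j : Fin d, F a = Sum.inr j := by
        intro a ha
        rw [Set.mem_compl_iff, hAset, Set.mem_setOf_eq] at ha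
        cases hFa : F a with
        | inl b => exact absurd ⟨b, hFa⟩ ha
        | inr j => exact ⟨j, rfl⟩
      have hinj : Set.InjOn k Asetᶜ := by
        intro a₁ h₁ a₂ h₂ heq
        obtain ⟨j₁, hj₁⟩ := hmemc a₁ h₁
        obtain ⟨j₂, hj₂⟩ := hmemc a₂ h₂
        rw [hk] at heq
        simp only [hj₁, hj₂] at heq
        change Sum.inl j₁ = Sum.inl j₂ at heq
        obtain rfl : j₁ = j₂ := Sum.inl_injective heq
        exact hFinj (hj₁.trans hj₂.symm)
      have himg : k '' Asetᶜ ⊆ Sum.inl '' (Set.univ : Set (Fin d)) := by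
        rintro x ⟨a, ha, rfl⟩
        obtain ⟨j, hj⟩ := hmemc a ha
        rw [hk]
        simp only [hj]
        exact ⟨j, trivial, rfl⟩
      calc Asetᶜ.ncard = (k '' Asetᶜ).ncard := (Set.ncard_image_of_injOn hinj).symm
        _ ≤ (Sum.inl '' (Set.univ : Set (Fin d))).ncard :=
            Set.ncard_le_ncard himg (Set.toFinite _)
        _ = d := by
            have h9 : ((Sum.inl : Fin d → Fin d ⊕ Unit) '' (Set.univ : Set (Fin d))).ncard
                = (Set.univ : Set (Fin d)).ncard :=
              Set.ncard_image_of_injective _ (Sum.inl_injective : Function.Injective (Sum.inl : Fin d → Fin d ⊕ Unit))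
            rw [h9]
            simp [Set.ncard_univ]
    have hcards : Aset.ncard + Asetᶜ.ncard = A.card := by
      rw [Set.ncard_add_ncard_compl]
      rw [Nat.card_eq_fintype_card, Fintype.card_coe]
    have := le_mu G hMmatch
    omega
  omega


/-- Two distinct incident edges on a cycle. -/
lemma exists_adj_edges {G : SimpleGraph V} {v : V} {c : G.Walk v v} (hcyc : c.IsCycle) :
    ∃ (e₁ e₂ : Sym2 V) (x : V),
      e₁ ∈ c.edges ∧ e₂ ∈ c.edges ∧ e₁ ≠ e₂ ∧ x ∈ e₁ ∧ x ∈ e₂ := by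
  have h3len := hcyc.three_le_length
  cases c with
  | nil => simp at h3len
  | cons h₁ rest =>
    cases rest with
    | nil => simp at h3len
    | cons h₂ rest₂ =>
      rename_i b b₂
      have hnodup := hcyc.isTrail.edges_nodup
      simp only [edges_cons, List.nodup_cons, List.mem_cons] at hnodup
      refine ⟨s(v, b), s(b, b₂), b, ?_, ?_, ?_, ?_, ?_⟩
      · simp [edges_cons]
      · simp [edges_cons]
      · intro hcon
        exact hnodup.1 (Or.inl hcon)
      · simp
      · simp

end Aux

end AlmostBip

/-- If `G` is an almost bipartite graph with unique odd cycle `C`, then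
`α(G) + μ(G) = |V(G)| - 1` if and only if every edge of `C` is `α`-critical. -/
theorem stmt_2 {V : Type*} [Fintype V] (G : SimpleGraph V) (v : V)
    (c : G.Walk v v) (huniq : UniqueOddCycle G c) :
    alpha G + mu G = Nat.card V - 1 ↔
      ∀ e ∈ cycleEdges c, alpha G < alpha (G.deleteEdges {e}) := by
  classical
  obtain ⟨⟨hcyc, hodd⟩, huniq2⟩ := huniq
  have hbip : ∀ e ∈ cycleEdges c,
      alpha (G.deleteEdges {e}) + mu (G.deleteEdges {e}) = Fintype.card V := by
    intro e he
    have hnoOddCycle : ∀ (u : V) (w : (G.deleteEdges {e}).Walk u u),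
        w.IsCycle → ¬ Odd w.length := by
      intro u w hwc hwodd
      have hsub : ∀ e' ∈ w.edges, e' ∈ G.edgeSet := fun e' he' =>
        SimpleGraph.edgeSet_mono (SimpleGraph.deleteEdges_le _) (w.edges_subset_edgeSet he')
      have hc' : (w.transfer G hsub).IsCycle := hwc.transfer hsub
      have ho' : Odd (w.transfer G hsub).length := by
        rw [SimpleGraph.Walk.length_transfer]; exact hwodd
      have hsets := huniq2 u (w.transfer G hsub) ⟨hc', ho'⟩
      have he' : e ∈ w.edges := by
        have h1 : e ∈ {e'' | e'' ∈ (w.transfer G hsub).edges} := by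
          rw [hsets]; exact he
        rwa [SimpleGraph.Walk.edges_transfer] at h1
      have h2 := w.edges_subset_edgeSet he'
      rw [SimpleGraph.edgeSet_deleteEdges] at h2
      exact h2.2 rfl
    obtain ⟨f, hf⟩ := exists_two_coloring (no_odd_closed_walk hnoOddCycle)
    have h1 := konig_ge hf
    have h2 := alpha_add_mu_le (G := G.deleteEdges {e})
    omega
  have hmumono : ∀ e : Sym2 V, mu (G.deleteEdges {e}) ≤ mu G :=
    fun e => mu_le_mu (SimpleGraph.deleteEdges_le _)
  have hcard1 : 1 ≤ Fintype.card V := Fintype.card_pos_iff.2 ⟨v⟩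
  have hNat : Nat.card V = Fintype.card V := Nat.card_eq_fintype_card
  obtain ⟨e₁, e₂, x, he₁, he₂, hne12, hx1, hx2⟩ := exists_adj_edges hcyc
  have hce₁ : e₁ ∈ cycleEdges c := he₁
  have hce₂ : e₂ ∈ cycleEdges c := he₂
  constructor
  · intro h e he
    rw [hNat] at h
    have h1 := hbip e he
    by_contra hlt
    have h3 : alpha (G.deleteEdges {e}) ≤ alpha G := not_lt.1 hlt
    have h4 := hmumono e
    omega
  · intro hcrit
    rw [hNat]
    have hub : alpha G + mu G ≤ Fintype.card V := alpha_add_mu_le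
    have hne : alpha G + mu G ≠ Fintype.card V := by
      intro heq
      obtain ⟨M, hM, hMcard⟩ := mu_spec G
      have hmem : ∀ e ∈ cycleEdges c, e ∈ M := by
        intro e he
        by_contra hnotm
        have hM' : IsMatching (G.deleteEdges {e}) M := by
          refine ⟨fun m hm => ?_, hM.2⟩
          rw [SimpleGraph.edgeSet_deleteEdges]
          refine ⟨hM.1 hm, fun hmeme => ?_⟩
          rw [Set.mem_singleton_iff] at hmeme
          exact hnotm (hmeme ▸ hm)
        have h3 := le_mu (G.deleteEdges {e}) hM'
        have h4 := hbip e he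
        have h5 := hcrit e he
        omega
      exact (hM.2 (hmem e₁ hce₁) (hmem e₂ hce₂) hne12) x hx1 hx2
    have hlow : Fintype.card V ≤ alpha G + mu G + 1 := by
      have h1 := hbip e₁ hce₁
      have h2 := alpha_del_le (G := G) e₁
      have h3 := hmumono e₁
      omega
    omega
end
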